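/- arXiv:2006.16648 — 2 statements merged into one kernel-verified Lean document; each statement's English description precedes it below -/
import Mathlib

section
/- Mutual information equals negative copula entropy: for a pair of continuous random variables (X,Y) with joint density f, marginal densities f_X, f_Y, marginal CDFs F_X, F_Y, and copula density c(u,v) satisfying f(x,y) = c(F_X(x), F_Y(y)) · f_X(x) · f_Y(y), the mutual information I(X;Y) = ∫∫ f(x,y) log( f(x,y) / (f_X(x) f_Y(y)) ) dx dy equals ∫∫_{[0,1]²} c(u,v) log c(u,v) du dv, i.e., I(X;Y) = -H_c(X,Y) where H_c(X,Y) = -∫∫ c log c. -/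
open MeasureTheory Set Filter ProbabilityTheory

/-! Almost everywhere `f log (f / (fX fY)) = (c log c)(FX, FY) · fX fY`. A continuous strictly
increasing CDF pushes its law forward to the uniform law on `[0, 1]`, so `(FX, FY)` pushes the
law with density `fX fY` forward to Lebesgue measure on the unit square, and this change of
variables turns the mutual information into `∫∫ c log c`. -/

-- Also for `a = 0`, where `log (c * 0 / 0) = log 0 = 0`.
theorem mul_log_mul_div_cancel_right (c a : ℝ) :
    c * a * Real.log (c * a / a) = c * Real.log c * a := by
  rcases eq_or_ne a 0 with rfl | ha
  · simp
  · rw [mul_div_cancel_right₀ c ha]; ring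

theorem withDensity_ofReal_apply {α : Type*} [MeasurableSpace α] {μ : Measure α} {g : α → ℝ}
    (hg : Integrable g μ) (hg_nonneg : 0 ≤ᵐ[μ] g) {s : Set α} (hs : MeasurableSet s) :
    μ.withDensity (fun x => ENNReal.ofReal (g x)) s = ENNReal.ofReal (∫ x in s, g x ∂μ) := by
  rw [withDensity_apply _ hs,
    ofReal_integral_eq_lintegral_ofReal hg.integrableOn (ae_restrict_of_ae hg_nonneg)]

theorem map_eq_volume_restrict_Icc_of_strictMono {μ : Measure ℝ} [IsProbabilityMeasure μ]
    {F : ℝ → ℝ} (hF : ∀ x, F x = μ.real (Iic x)) (hcont : Continuous F) (hmono : StrictMono F) :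
    μ.map F = volume.restrict (Icc 0 1) := by
  have hcdf : cdf μ = F := funext fun x => (cdf_eq_real μ x).trans (hF x).symm
  have hpos : ∀ x, 0 < F x := fun x =>
    (hF (x - 1) ▸ measureReal_nonneg).trans_lt (hmono (sub_one_lt x))
  have hlt_one : ∀ x, F x < 1 := fun x =>
    (hmono (lt_add_one x)).trans_le (hF (x + 1) ▸ measureReal_le_one)
  have := Measure.isProbabilityMeasure_map (μ := μ) hcont.measurable.aemeasurable
  refine Measure.ext_of_Iic _ _ fun b => ?_
  rw [Measure.map_apply hcont.measurable measurableSet_Iic,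
    Measure.restrict_apply measurableSet_Iic]
  rcases le_or_gt b 0 with hb0 | hb0
  · have hempty : F ⁻¹' Iic b = ∅ :=
      eq_empty_of_forall_notMem fun x hx => (hpos x).not_ge (le_trans hx hb0)
    have hnull : volume (Iic b ∩ Icc (0 : ℝ) 1) = 0 :=
      measure_mono_null (t := Icc 0 b) (fun u hu => ⟨hu.2.1, hu.1⟩)
        (by rw [Real.volume_Icc, ENNReal.ofReal_eq_zero]; linarith)
    rw [hempty, hnull, measure_empty]
  rcases le_or_gt 1 b with hb1 | hb1
  · have huniv : F ⁻¹' Iic b = univ := eq_univ_of_forall fun x => (hlt_one x).le.trans hb1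
    rw [huniv, inter_eq_self_of_subset_right fun u hu => hu.2.trans hb1, Real.volume_Icc]
    simp
  obtain ⟨x, rfl⟩ : b ∈ range F := mem_range_of_exists_le_of_exists_ge hcont
    (((hcdf ▸ tendsto_cdf_atBot μ).eventually (eventually_le_nhds hb0)).exists)
    (((hcdf ▸ tendsto_cdf_atTop μ).eventually (eventually_ge_nhds hb1)).exists)
  have hpre : F ⁻¹' Iic (F x) = Iic x := ext fun y => hmono.le_iff_le
  have hinter : Iic (F x) ∩ Icc 0 1 = Icc 0 (F x) := by
    ext u
    simp only [mem_inter_iff, mem_Iic, mem_Icc]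
    constructor
    · rintro ⟨hu, hu0, -⟩; exact ⟨hu0, hu⟩
    · rintro ⟨hu0, hu⟩; exact ⟨hu, hu0, hu.trans hb1.le⟩
  rw [hpre, hinter, Real.volume_Icc, sub_zero, hF, ofReal_measureReal]

theorem map_withDensity_eq_volume_restrict_Icc {g F : ℝ → ℝ} (hg_nonneg : ∀ x, 0 ≤ g x)
    (hg_int : ∫ x, g x = 1) (hF : ∀ x, F x = ∫ t in Iic x, g t) (hcont : Continuous F)
    (hmono : StrictMono F) :
    (volume.withDensity fun x => ENNReal.ofReal (g x)).map F = volume.restrict (Icc 0 1) := by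
  have hg : Integrable g := .of_integral_ne_zero (by simp [hg_int])
  have hg_nonneg' : 0 ≤ᵐ[volume] g := .of_forall hg_nonneg
  have : IsProbabilityMeasure (volume.withDensity fun x => ENNReal.ofReal (g x)) :=
    ⟨by rw [withDensity_ofReal_apply hg hg_nonneg' .univ, setIntegral_univ, hg_int,
      ENNReal.ofReal_one]⟩
  refine map_eq_volume_restrict_Icc_of_strictMono (fun x => ?_) hcont hmono
  rw [measureReal_def, withDensity_ofReal_apply hg hg_nonneg' measurableSet_Iic,
    ENNReal.toReal_ofReal (setIntegral_nonneg measurableSet_Iic fun t _ => hg_nonneg t), hF]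

theorem integral_comp_prodMap_mul {α β γ δ : Type*} [MeasurableSpace α] [MeasurableSpace β]
    [MeasurableSpace γ] [MeasurableSpace δ] {μ : Measure α} {ν : Measure β} [SFinite μ]
    [SFinite ν] {μ' : Measure γ} {ν' : Measure δ} {gX : α → ℝ} {gY : β → ℝ} {FX : α → γ}
    {FY : β → δ} (hgX_nonneg : ∀ x, 0 ≤ gX x) (hgY_nonneg : ∀ y, 0 ≤ gY y)
    (hgX : Measurable gX) (hgY : Measurable gY) (hFX : Measurable FX) (hFY : Measurable FY)
    (hX : (μ.withDensity fun x => ENNReal.ofReal (gX x)).map FX = μ')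
    (hY : (ν.withDensity fun y => ENNReal.ofReal (gY y)).map FY = ν')
    {G : γ × δ → ℝ} (hG : AEStronglyMeasurable G (μ'.prod ν')) :
    ∫ p, G (FX p.1, FY p.2) * (gX p.1 * gY p.2) ∂(μ.prod ν) = ∫ u, G u ∂(μ'.prod ν') := by
  subst hX hY
  rw [Measure.map_prod_map _ _ hFX hFY] at hG ⊢
  rw [integral_map (hFX.prodMap hFY).aemeasurable hG,
    prod_withDensity hgX.ennreal_ofReal hgY.ennreal_ofReal,
    integral_withDensity_eq_integral_toReal_smul (by fun_prop) (.of_forall fun _ => by finiteness)]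
  refine integral_congr_ae (.of_forall fun p => ?_)
  dsimp only [Prod.map]
  rw [← ENNReal.ofReal_mul (hgX_nonneg _),
    ENNReal.toReal_ofReal (mul_nonneg (hgX_nonneg _) (hgY_nonneg _)), smul_eq_mul, mul_comm]

theorem mutual_information_eq_neg_copula_entropy_general
    (f : ℝ × ℝ → ℝ) (fX fY FX FY : ℝ → ℝ) (c : ℝ × ℝ → ℝ)
    (hfX_nonneg : ∀ x, 0 ≤ fX x) (hfY_nonneg : ∀ y, 0 ≤ fY y)
    (hf_meas : Measurable f) (hc_meas : Measurable c)
    (hf_prob : ∫ p, f p = 1)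
    (hmargX : ∀ x, fX x = ∫ y, f (x, y)) (hmargY : ∀ y, fY y = ∫ x, f (x, y))
    (hFX : ∀ x, FX x = ∫ t in Iic x, fX t) (hFY : ∀ y, FY y = ∫ t in Iic y, fY t)
    (hFXc : Continuous FX) (hFYc : Continuous FY)
    (hFXm : StrictMono FX) (hFYm : StrictMono FY)
    (hfac : ∀ᵐ p : ℝ × ℝ, f p = c (FX p.1, FY p.2) * fX p.1 * fY p.2) :
    ∫ p : ℝ × ℝ, f p * Real.log (f p / (fX p.1 * fY p.2))
      = ∫ u in Icc (0:ℝ) 1 ×ˢ Icc (0:ℝ) 1, c u * Real.log (c u) := by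
  have hf : Integrable f (volume.prod volume) :=
    .of_integral_ne_zero (by rw [← Measure.volume_eq_prod, hf_prob]; exact one_ne_zero)
  have hfX : fX = fun x => ∫ y, f (x, y) := funext hmargX
  have hfY : fY = fun y => ∫ x, f (x, y) := funext hmargY
  have hfX_meas : Measurable fX :=
    hfX ▸ hf_meas.stronglyMeasurable.integral_prod_right'.measurable
  have hfY_meas : Measurable fY :=
    hfY ▸ hf_meas.stronglyMeasurable.integral_prod_left'.measurable
  have hX := map_withDensity_eq_volume_restrict_Icc hfX_nonneg
    (by rw [hfX, ← integral_prod f hf, ← Measure.volume_eq_prod, hf_prob]) hFX hFXc hFXm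
  have hY := map_withDensity_eq_volume_restrict_Icc hfY_nonneg
    (by rw [hfY, ← integral_prod_symm f hf, ← Measure.volume_eq_prod, hf_prob]) hFY hFYc hFYm
  calc ∫ p : ℝ × ℝ, f p * Real.log (f p / (fX p.1 * fY p.2))
      = ∫ p : ℝ × ℝ, c (FX p.1, FY p.2) * Real.log (c (FX p.1, FY p.2)) * (fX p.1 * fY p.2) :=
        integral_congr_ae <| hfac.mono fun p hp => by
          dsimp only
          rw [hp, mul_assoc (c _) (fX _) (fY _), mul_log_mul_div_cancel_right]
    _ = ∫ u in Icc (0:ℝ) 1 ×ˢ Icc (0:ℝ) 1, c u * Real.log (c u) := by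
        rw [Measure.volume_eq_prod, ← Measure.prod_restrict]
        exact integral_comp_prodMap_mul hfX_nonneg hfY_nonneg hfX_meas hfY_meas
          hFXc.measurable hFYc.measurable hX hY (G := fun u => c u * Real.log (c u)) (by fun_prop)

/-- Mutual information equals negative copula entropy:
if the joint density factors through a copula density,
then `I(X;Y) = ∫∫_{[0,1]²} c log c = -H_c(X,Y)`. -/
theorem mutual_information_eq_neg_copula_entropy
    (f : ℝ × ℝ → ℝ) (fX fY FX FY : ℝ → ℝ) (c : ℝ × ℝ → ℝ)
    (hf_nonneg : ∀ p, 0 ≤ f p) (hfX_nonneg : ∀ x, 0 ≤ fX x)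
    (hfY_nonneg : ∀ y, 0 ≤ fY y) (hc_nonneg : ∀ u, 0 ≤ c u)
    (hf_meas : Measurable f) (hc_meas : Measurable c)
    (hf_prob : ∫ p, f p = 1)
    (hmargX : ∀ x, fX x = ∫ y, f (x, y)) (hmargY : ∀ y, fY y = ∫ x, f (x, y))
    (hFX : ∀ x, FX x = ∫ t in Iic x, fX t) (hFY : ∀ y, FY y = ∫ t in Iic y, fY t)
    (hFXc : Continuous FX) (hFYc : Continuous FY)
    (hFXm : StrictMono FX) (hFYm : StrictMono FY)
    (hfac : ∀ᵐ p : ℝ × ℝ, f p = c (FX p.1, FY p.2) * fX p.1 * fY p.2)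
    (hint : Integrable (fun p : ℝ × ℝ => f p * Real.log (f p / (fX p.1 * fY p.2))))
    (hintc : IntegrableOn (fun u : ℝ × ℝ => c u * Real.log (c u))
      (Icc (0:ℝ) 1 ×ˢ Icc (0:ℝ) 1)) :
    ∫ p : ℝ × ℝ, f p * Real.log (f p / (fX p.1 * fY p.2))
      = ∫ u in Icc (0:ℝ) 1 ×ˢ Icc (0:ℝ) 1, c u * Real.log (c u) :=
  mutual_information_eq_neg_copula_entropy_general f fX fY FX FY c hfX_nonneg hfY_nonneg hf_meas
    hc_meas hf_prob hmargX hmargY hFX hFY hFXc hFYc hFXm hFYm hfac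
end

section
/- Entropy decomposition via copula entropy: under the same assumptions, the joint differential entropy satisfies H(X,Y) = H(X) + H(Y) + H_c(X,Y), where H(X,Y) = -∫∫ f log f, H(X) = -∫ f_X log f_X, H(Y) = -∫ f_Y log f_Y, and H_c(X,Y) = -∫∫_{[0,1]²} c log c. -/
/-!
Almost everywhere `f = c(F_X, F_Y) f_X f_Y`, so `f log f` splits into
`f log c(F_X, F_Y) + f log f_X + f log f_Y`. Integrating out the other variable in the last two
terms leaves `∫ f_X log f_X` and `∫ f_Y log f_Y`. The first term is the integral of
`(c log c) ∘ (F_X × F_Y)` against the product of the marginal laws `f_X dx ⊗ f_Y dy`, and the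
probability integral transform pushes that product forward under `F_X × F_Y` to Lebesgue measure
on the unit square.
-/

open MeasureTheory Set ProbabilityTheory

section Marginal

variable {α β : Type*} [MeasurableSpace α] [MeasurableSpace β] {μ : Measure α}
  {ν : Measure β} [SFinite μ] [SFinite ν] {f : α × β → ℝ}

theorem integrable_mul_comp_fst {g φ : α → ℝ} (hf0 : 0 ≤ᵐ[μ.prod ν] f)
    (hf : Integrable f (μ.prod ν)) (hg : ∀ x, g x = ∫ y, f (x, y) ∂ν)
    (hφ : AEStronglyMeasurable φ μ) (hgφ : Integrable (fun x => g x * φ x) μ) :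
    Integrable (fun p => f p * φ p.1) (μ.prod ν) := by
  refine (integrable_prod_iff (f := fun p => f p * φ p.1) (hf.1.mul hφ.comp_fst)).2
    ⟨?_, hgφ.norm.congr ?_⟩
  · filter_upwards [hf.prod_right_ae] with x hx using hx.mul_const (φ x)
  · filter_upwards [Measure.ae_ae_of_ae_prod hf0] with x hx
    have hfx : ∫ y, ‖f (x, y) * φ x‖ ∂ν = ∫ y, f (x, y) * ‖φ x‖ ∂ν :=
      integral_congr_ae <| hx.mono fun y (hy : 0 ≤ f (x, y)) => by
        simp only [norm_mul, Real.norm_of_nonneg hy]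
    rw [hfx, integral_mul_const, norm_mul, hg, Real.norm_of_nonneg (integral_nonneg_of_ae hx)]

theorem integral_mul_comp_fst {g φ : α → ℝ}
    (hfφ : Integrable (fun p => f p * φ p.1) (μ.prod ν))
    (hg : ∀ x, g x = ∫ y, f (x, y) ∂ν) :
    ∫ p, f p * φ p.1 ∂(μ.prod ν) = ∫ x, g x * φ x ∂μ := by
  simp_rw [integral_prod _ hfφ, integral_mul_const, hg]

theorem integrable_mul_comp_snd {g ψ : β → ℝ} (hf0 : 0 ≤ᵐ[μ.prod ν] f)
    (hf : Integrable f (μ.prod ν)) (hg : ∀ y, g y = ∫ x, f (x, y) ∂μ)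
    (hψ : AEStronglyMeasurable ψ ν) (hgψ : Integrable (fun y => g y * ψ y) ν) :
    Integrable (fun p => f p * ψ p.2) (μ.prod ν) :=
  (integrable_mul_comp_fst (f := f ∘ Prod.swap)
    (Measure.measurePreserving_swap.quasiMeasurePreserving.ae hf0) hf.swap hg hψ hgψ).swap

theorem integral_mul_comp_snd {g ψ : β → ℝ}
    (hfψ : Integrable (fun p => f p * ψ p.2) (μ.prod ν))
    (hg : ∀ y, g y = ∫ x, f (x, y) ∂μ) :
    ∫ p, f p * ψ p.2 ∂(μ.prod ν) = ∫ y, g y * ψ y ∂ν :=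
  calc ∫ p, f p * ψ p.2 ∂(μ.prod ν) = ∫ q, f q.swap * ψ q.1 ∂(ν.prod μ) :=
        (integral_prod_swap _).symm
    _ = ∫ y, g y * ψ y ∂ν := integral_mul_comp_fst (f := f ∘ Prod.swap) hfψ.swap hg

end Marginal

theorem isProbabilityMeasure_withDensity_ofReal {α : Type*} [MeasurableSpace α]
    {μ : Measure α} {g : α → ℝ} (hg0 : 0 ≤ᵐ[μ] g) (hg : Integrable g μ)
    (hg1 : ∫ x, g x ∂μ = 1) :
    IsProbabilityMeasure (μ.withDensity fun x => ENNReal.ofReal (g x)) := by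
  constructor
  rw [withDensity_apply _ MeasurableSet.univ, Measure.restrict_univ,
    ← ofReal_integral_eq_lintegral_ofReal hg hg0, hg1, ENNReal.ofReal_one]

theorem cdf_withDensity_ofReal {g : ℝ → ℝ} (hg0 : 0 ≤ᵐ[volume] g) (hg : Integrable g)
    (hg1 : ∫ x, g x = 1) (x : ℝ) :
    cdf (volume.withDensity fun t => ENNReal.ofReal (g t)) x = ∫ t in Iic x, g t := by
  have := isProbabilityMeasure_withDensity_ofReal hg0 hg hg1
  rw [cdf_eq_real, measureReal_def, withDensity_apply _ measurableSet_Iic,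
    ← ofReal_integral_eq_lintegral_ofReal hg.integrableOn (ae_restrict_of_ae hg0),
    ENNReal.toReal_ofReal (setIntegral_nonneg_of_ae_restrict (ae_restrict_of_ae hg0))]

theorem map_cdf_eq_restrict_Ioo (μ : Measure ℝ) [IsProbabilityMeasure μ]
    (hc : Continuous (cdf μ)) (hm : StrictMono (cdf μ)) :
    μ.map (cdf μ) = volume.restrict (Ioo 0 1) := by
  have hpos (x : ℝ) : 0 < cdf μ x := (cdf_nonneg μ (x - 1)).trans_lt (hm (by linarith))
  have hlt (x : ℝ) : cdf μ x < 1 := (hm (lt_add_one x)).trans_le (cdf_le_one μ _)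
  have := Measure.isProbabilityMeasure_map (μ := μ) hc.measurable.aemeasurable
  refine Measure.ext_of_Iic _ _ fun a => ?_
  rw [Measure.map_apply hc.measurable measurableSet_Iic,
    Measure.restrict_apply measurableSet_Iic]
  rcases le_or_gt a 0 with ha0 | ha0
  · have hpre : cdf μ ⁻¹' Iic a = ∅ :=
      eq_empty_of_forall_notMem fun x hx => (hpos x).not_ge (le_trans hx ha0)
    have hint : Iic a ∩ Ioo 0 1 = ∅ :=
      eq_empty_of_forall_notMem fun x hx => hx.2.1.not_ge (le_trans hx.1 ha0)
    simp [hpre, hint]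
  rcases le_or_gt 1 a with ha1 | ha1
  · have hpre : cdf μ ⁻¹' Iic a = univ := eq_univ_of_forall fun x => (hlt x).le.trans ha1
    have hint : Iic a ∩ Ioo 0 1 = Ioo 0 1 := inter_eq_right.2 fun x hx => hx.2.le.trans ha1
    simp [hpre, hint]
  obtain ⟨b, rfl⟩ : a ∈ range (cdf μ) := mem_range_of_exists_le_of_exists_ge hc
    (((tendsto_cdf_atBot μ).eventually_lt_const ha0).exists.imp fun _ => le_of_lt)
    (((tendsto_cdf_atTop μ).eventually_const_lt ha1).exists.imp fun _ => le_of_lt)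
  have hpre : cdf μ ⁻¹' Iic (cdf μ b) = Iic b := by ext x; simp [hm.le_iff_le]
  have hint : Iic (cdf μ b) ∩ Ioo 0 1 = Ioc 0 (cdf μ b) := by
    ext x
    simp only [mem_inter_iff, mem_Iic, mem_Ioo, mem_Ioc]
    constructor
    · rintro ⟨hb, h0, -⟩; exact ⟨h0, hb⟩
    · rintro ⟨h0, hb⟩; exact ⟨hb, h0, hb.trans_lt ha1⟩
  rw [hpre, hint, Real.volume_Ioc, sub_zero, ofReal_cdf]

section CopulaTransform

variable {E : Type*} [NormedAddCommGroup E] [NormedSpace ℝ E]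

theorem integral_comp_prodMap_cdf (μ ν : Measure ℝ) [IsProbabilityMeasure μ]
    [IsProbabilityMeasure ν] (hμc : Continuous (cdf μ)) (hμm : StrictMono (cdf μ))
    (hνc : Continuous (cdf ν)) (hνm : StrictMono (cdf ν)) {h : ℝ × ℝ → E}
    (hh : AEStronglyMeasurable h (volume.restrict (Icc 0 1 ×ˢ Icc 0 1))) :
    ∫ p, h (cdf μ p.1, cdf ν p.2) ∂(μ.prod ν) = ∫ u in Icc 0 1 ×ˢ Icc 0 1, h u := by
  have hmap : (μ.prod ν).map (Prod.map (cdf μ) (cdf ν))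
      = volume.restrict (Icc 0 1 ×ˢ Icc 0 1) := by
    rw [← Measure.map_prod_map _ _ hμc.measurable hνc.measurable,
      map_cdf_eq_restrict_Ioo μ hμc hμm, map_cdf_eq_restrict_Ioo ν hνc hνm,
      Measure.restrict_congr_set Ioo_ae_eq_Icc, Measure.prod_restrict, Measure.volume_eq_prod]
  rw [← hmap] at hh ⊢
  exact (integral_map (hμc.measurable.prodMap hνc.measurable).aemeasurable hh).symm

theorem integral_comp_prodMap_mul_density {fX fY FX FY : ℝ → ℝ}
    (hfX0 : 0 ≤ᵐ[volume] fX) (hfY0 : 0 ≤ᵐ[volume] fY) (hfX : Integrable fX)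
    (hfY : Integrable fY) (hfX1 : ∫ x, fX x = 1) (hfY1 : ∫ y, fY y = 1)
    (hFX : ∀ x, FX x = ∫ t in Iic x, fX t) (hFY : ∀ y, FY y = ∫ t in Iic y, fY t)
    (hFXc : Continuous FX) (hFYc : Continuous FY) (hFXm : StrictMono FX)
    (hFYm : StrictMono FY) {h : ℝ × ℝ → E}
    (hh : AEStronglyMeasurable h (volume.restrict (Icc 0 1 ×ˢ Icc 0 1))) :
    ∫ p, (fX p.1 * fY p.2) • h (FX p.1, FY p.2) ∂(volume.prod volume)
      = ∫ u in Icc 0 1 ×ˢ Icc 0 1, h u := by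
  have := isProbabilityMeasure_withDensity_ofReal hfX0 hfX hfX1
  have := isProbabilityMeasure_withDensity_ofReal hfY0 hfY hfY1
  obtain rfl : FX = cdf (volume.withDensity fun x => ENNReal.ofReal (fX x)) :=
    funext fun x => by rw [hFX, cdf_withDensity_ofReal hfX0 hfX hfX1]
  obtain rfl : FY = cdf (volume.withDensity fun y => ENNReal.ofReal (fY y)) :=
    funext fun y => by rw [hFY, cdf_withDensity_ofReal hfY0 hfY hfY1]
  have hdens : AEMeasurable
      (fun p : ℝ × ℝ => ENNReal.ofReal (fX p.1) * ENNReal.ofReal (fY p.2))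
      (volume.prod volume) :=
    hfX.1.aemeasurable.ennreal_ofReal.comp_fst.mul hfY.1.aemeasurable.ennreal_ofReal.comp_snd
  rw [← integral_comp_prodMap_cdf _ _ hFXc hFXm hFYc hFYm hh,
    prod_withDensity₀ hfX.1.aemeasurable.ennreal_ofReal hfY.1.aemeasurable.ennreal_ofReal,
    integral_withDensity_eq_integral_toReal_smul₀ hdens
      (.of_forall fun _ => ENNReal.mul_lt_top ENNReal.ofReal_lt_top ENNReal.ofReal_lt_top)]
  refine integral_congr_ae ?_
  filter_upwards [Measure.quasiMeasurePreserving_fst.ae hfX0,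
    Measure.quasiMeasurePreserving_snd.ae hfY0] with p hx hy
  rw [ENNReal.toReal_mul, ENNReal.toReal_ofReal hx, ENNReal.toReal_ofReal hy]

end CopulaTransform

theorem mul_log_eq_of_eq_mul_mul {a b c d : ℝ} (h : a = b * c * d) :
    a * Real.log a = a * Real.log b + a * Real.log c + a * Real.log d := by
  rcases eq_or_ne a 0 with ha | ha
  · simp [ha]
  have hb : b ≠ 0 := by rintro rfl; simp_all
  have hc : c ≠ 0 := by rintro rfl; simp_all
  have hd : d ≠ 0 := by rintro rfl; simp_all
  rw [h, Real.log_mul (mul_ne_zero hb hc) hd, Real.log_mul hb hc]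
  ring

theorem entropy_decomposition_copula_general
    (f : ℝ × ℝ → ℝ) (fX fY FX FY : ℝ → ℝ) (c : ℝ × ℝ → ℝ)
    (hf_nonneg : ∀ p, 0 ≤ f p) (hfX_nonneg : ∀ x, 0 ≤ fX x)
    (hfY_nonneg : ∀ y, 0 ≤ fY y)
    (hc_meas : Measurable c)
    (hf_prob : ∫ p, f p = 1)
    (hmargX : ∀ x, fX x = ∫ y, f (x, y)) (hmargY : ∀ y, fY y = ∫ x, f (x, y))
    (hFX : ∀ x, FX x = ∫ t in Iic x, fX t) (hFY : ∀ y, FY y = ∫ t in Iic y, fY t)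
    (hFXc : Continuous FX) (hFYc : Continuous FY)
    (hFXm : StrictMono FX) (hFYm : StrictMono FY)
    (hfac : ∀ᵐ p : ℝ × ℝ, f p = c (FX p.1, FY p.2) * fX p.1 * fY p.2)
    (hintf : Integrable (fun p : ℝ × ℝ => f p * Real.log (f p)))
    (hintfX : Integrable (fun x : ℝ => fX x * Real.log (fX x)))
    (hintfY : Integrable (fun y : ℝ => fY y * Real.log (fY y))) :
    -(∫ p : ℝ × ℝ, f p * Real.log (f p))
      = -(∫ x : ℝ, fX x * Real.log (fX x)) + -(∫ y : ℝ, fY y * Real.log (fY y))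
        + -(∫ u in Icc (0:ℝ) 1 ×ˢ Icc (0:ℝ) 1, c u * Real.log (c u)) := by
  rw [Measure.volume_eq_prod] at hf_prob hfac hintf ⊢
  have hf : Integrable f (volume.prod volume) := .of_integral_ne_zero (by simp [hf_prob])
  have hfX : Integrable fX := funext hmargX ▸ hf.integral_prod_left
  have hfY : Integrable fY := funext hmargY ▸ hf.integral_prod_right
  have hfX1 : ∫ x, fX x = 1 := by simp_rw [hmargX, ← integral_prod f hf, hf_prob]
  have hfY1 : ∫ y, fY y = 1 := by simp_rw [hmargY, ← integral_prod_symm f hf, hf_prob]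
  have hX := integrable_mul_comp_fst (.of_forall hf_nonneg) hf hmargX
    hfX.1.aemeasurable.log.aestronglyMeasurable hintfX
  have hY := integrable_mul_comp_snd (.of_forall hf_nonneg) hf hmargY
    hfY.1.aemeasurable.log.aestronglyMeasurable hintfY
  have hsplit := hfac.mono fun p hp => mul_log_eq_of_eq_mul_mul hp
  have hcop : (fun p => f p * Real.log (c (FX p.1, FY p.2))) =ᵐ[volume.prod volume]
      fun p => (fX p.1 * fY p.2) • (c (FX p.1, FY p.2) * Real.log (c (FX p.1, FY p.2))) :=
    hfac.mono fun p hp => by simp only [hp, smul_eq_mul]; ring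
  have hC : Integrable (fun p => f p * Real.log (c (FX p.1, FY p.2))) (volume.prod volume) :=
    ((hintf.sub hX).sub hY).congr (hsplit.mono fun p hp => by simp only [Pi.sub_apply, hp]; ring)
  rw [integral_congr_ae hsplit, integral_add (hC.add hX : Integrable (fun p => _ + _) _) hY,
    integral_add hC hX, integral_congr_ae hcop,
    integral_comp_prodMap_mul_density (.of_forall hfX_nonneg) (.of_forall hfY_nonneg)
      hfX hfY hfX1 hfY1 hFX hFY hFXc hFYc hFXm hFYm (h := fun u => c u * Real.log (c u))
      (hc_meas.mul hc_meas.log).aestronglyMeasurable,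
    integral_mul_comp_fst (φ := fun x => Real.log (fX x)) hX hmargX,
    integral_mul_comp_snd (ψ := fun y => Real.log (fY y)) hY hmargY, Measure.volume_eq_prod]
  ring

/-- Entropy decomposition via copula entropy:
`H(X,Y) = H(X) + H(Y) + H_c(X,Y)`. -/
theorem entropy_decomposition_copula
    (f : ℝ × ℝ → ℝ) (fX fY FX FY : ℝ → ℝ) (c : ℝ × ℝ → ℝ)
    (hf_nonneg : ∀ p, 0 ≤ f p) (hfX_nonneg : ∀ x, 0 ≤ fX x)
    (hfY_nonneg : ∀ y, 0 ≤ fY y) (hc_nonneg : ∀ u, 0 ≤ c u)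
    (hf_meas : Measurable f) (hc_meas : Measurable c)
    (hf_prob : ∫ p, f p = 1)
    (hmargX : ∀ x, fX x = ∫ y, f (x, y)) (hmargY : ∀ y, fY y = ∫ x, f (x, y))
    (hFX : ∀ x, FX x = ∫ t in Iic x, fX t) (hFY : ∀ y, FY y = ∫ t in Iic y, fY t)
    (hFXc : Continuous FX) (hFYc : Continuous FY)
    (hFXm : StrictMono FX) (hFYm : StrictMono FY)
    (hfac : ∀ᵐ p : ℝ × ℝ, f p = c (FX p.1, FY p.2) * fX p.1 * fY p.2)
    (hintf : Integrable (fun p : ℝ × ℝ => f p * Real.log (f p)))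
    (hintfX : Integrable (fun x : ℝ => fX x * Real.log (fX x)))
    (hintfY : Integrable (fun y : ℝ => fY y * Real.log (fY y)))
    (hintc : IntegrableOn (fun u : ℝ × ℝ => c u * Real.log (c u))
      (Icc (0:ℝ) 1 ×ˢ Icc (0:ℝ) 1)) :
    -(∫ p : ℝ × ℝ, f p * Real.log (f p))
      = -(∫ x : ℝ, fX x * Real.log (fX x)) + -(∫ y : ℝ, fY y * Real.log (fY y))
        + -(∫ u in Icc (0:ℝ) 1 ×ˢ Icc (0:ℝ) 1, c u * Real.log (c u)) :=
  entropy_decomposition_copula_general f fX fY FX FY c hf_nonneg hfX_nonneg hfY_nonneg hc_meas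
    hf_prob hmargX hmargY hFX hFY hFXc hFYc hFXm hFYm hfac hintf hintfX hintfY
end
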